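/- arXiv:1905.06692 — 6 statements merged into one kernel-verified Lean document; each statement's English description precedes it below -/
import Mathlib

section
/- For every nonnegative integer n, the polynomial ∑_{i=0}^{n} (binom(n,i))² xⁱ equals ∑_{i=0}^{⌊n/2⌋} multinomial(n; i, i, n−2i) · xⁱ (1+x)^{n−2i}, where multinomial(n; i, i, n−2i) = n!/(i!·i!·(n−2i)!). In particular, this polynomial is γ-positive. -/
open Polynomial Finset

lemma S_lemma (m a b : ℕ) (h : a + b ≤ m) :
    m.choose a * (m - a).choose b = m.choose b * (m - b).choose a := by
  have h1 := Nat.choose_mul (n := m) (Nat.le_add_right a b)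
  have h2 := Nat.choose_mul (n := m) (Nat.le_add_left b a)
  simp only [Nat.add_sub_cancel, Nat.add_sub_cancel_left] at h1 h2
  rw [Nat.choose_symm_add] at h1
  omega

lemma mult_eq (n i : ℕ) (h : 2 * i ≤ n) :
    n.factorial / (i.factorial * i.factorial * (n - 2 * i).factorial)
      = n.choose i * (n - i).choose i := by
  have h1 : i ≤ n := by omega
  have h2 : i ≤ n - i := by omega
  have e1 := Nat.choose_mul_factorial_mul_factorial h1
  have e2 := Nat.choose_mul_factorial_mul_factorial h2
  have h3 : n - i - i = n - 2 * i := by omega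
  rw [h3] at e2
  have key : n.factorial = (n.choose i * (n - i).choose i) *
      (i.factorial * i.factorial * (n - 2 * i).factorial) := by
    rw [← e1, ← e2]; ring
  rw [key, Nat.mul_div_cancel]
  positivity

lemma tri (n k i : ℕ) (hk : k ≤ n) (hik : i ≤ k) (hi2 : 2 * i ≤ n) :
    n.choose i * (n - i).choose i * (n - 2 * i).choose (k - i)
      = n.choose k * (k.choose i * (n - k).choose i) := by
  by_cases hki : k + i ≤ n
  · have hs : i + (k - i) ≤ n - i := by omega
    have step2 := S_lemma (n - i) i (k - i) hs
    have e1 : n - i - i = n - 2 * i := by omega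
    have e2 : n - i - (k - i) = n - k := by omega
    rw [e1, e2] at step2
    have step1 := Nat.choose_mul (n := n) hik
    calc n.choose i * (n - i).choose i * (n - 2 * i).choose (k - i)
        = n.choose i * ((n - i).choose i * (n - 2 * i).choose (k - i)) := by ring
      _ = n.choose i * ((n - i).choose (k - i) * (n - k).choose i) := by rw [step2]
      _ = (n.choose i * (n - i).choose (k - i)) * (n - k).choose i := by ring
      _ = (n.choose k * k.choose i) * (n - k).choose i := by rw [step1]
      _ = n.choose k * (k.choose i * (n - k).choose i) := by ring
  · rw [Nat.choose_eq_zero_of_lt (show n - 2 * i < k - i by omega),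
        Nat.choose_eq_zero_of_lt (show n - k < i by omega)]
    ring

lemma vand (n k : ℕ) (hk : k ≤ n) :
    ∑ i ∈ range (n / 2 + 1), k.choose i * (n - k).choose i = n.choose k := by
  have big : ∑ i ∈ range (n + 1), k.choose i * (n - k).choose i = n.choose k := by
    have hv := Nat.add_choose_eq k (n - k) (n - k)
    rw [Finset.Nat.sum_antidiagonal_eq_sum_range_succ (fun a b => k.choose a * (n - k).choose b)]
      at hv
    have hkk : k + (n - k) = n := by omega
    rw [hkk, Nat.choose_symm hk] at hv
    have hv' : ∑ i ∈ range (n - k + 1), k.choose i * (n - k).choose i = n.choose k := by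
      rw [hv]
      apply Finset.sum_congr rfl
      intro i hi
      simp only [Finset.mem_range] at hi
      rw [Nat.choose_symm (show i ≤ n - k by omega)]
    rw [← hv']
    symm
    apply Finset.sum_subset
    · intro x hx; simp only [Finset.mem_range] at *; omega
    · intro x hx hx'
      simp only [Finset.mem_range] at hx hx'
      rw [Nat.choose_eq_zero_of_lt (show n - k < x by omega), mul_zero]
  rw [← big]
  apply Finset.sum_subset
  · intro x hx; simp only [Finset.mem_range] at *; omega
  · intro x hx hx'
    simp only [Finset.mem_range] at hx hx'
    have : k < x ∨ n - k < x := by omega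
    rcases this with h | h
    · rw [Nat.choose_eq_zero_of_lt h, zero_mul]
    · rw [Nat.choose_eq_zero_of_lt h, mul_zero]

lemma coeffId (n k : ℕ) :
    (if k ≤ n then n.choose k ^ 2 else 0)
      = ∑ i ∈ range (n / 2 + 1), if i ≤ k then
          (n.factorial / (i.factorial * i.factorial * (n - 2 * i).factorial))
            * (n - 2 * i).choose (k - i) else 0 := by
  by_cases hk : k ≤ n
  · rw [if_pos hk]
    have : ∀ i ∈ range (n / 2 + 1),
        (if i ≤ k then (n.factorial / (i.factorial * i.factorial * (n - 2 * i).factorial))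
            * (n - 2 * i).choose (k - i) else 0)
          = n.choose k * (k.choose i * (n - k).choose i) := by
      intro i hi
      simp only [Finset.mem_range] at hi
      have hi2 : 2 * i ≤ n := by omega
      rw [mult_eq n i hi2]
      split_ifs with h
      · exact tri n k i hk h hi2
      · rw [Nat.choose_eq_zero_of_lt (show k < i by omega)]
        ring
    rw [Finset.sum_congr rfl this, ← Finset.mul_sum, vand n k hk, sq]
  · rw [if_neg hk]
    symm
    apply Finset.sum_eq_zero
    intro i hi
    simp only [Finset.mem_range] at hi
    split_ifs with h
    · rw [Nat.choose_eq_zero_of_lt (show n - 2 * i < k - i by omega), mul_zero]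
    · rfl

lemma term_coeff (a : ℝ) (i j k : ℕ) :
    (C a * X ^ i * (1 + X) ^ j).coeff k
      = if i ≤ k then a * (j.choose (k - i) : ℝ) else 0 := by
  rw [mul_right_comm, Polynomial.coeff_mul_X_pow']
  split_ifs with h
  · rw [Polynomial.coeff_C_mul, Polynomial.coeff_one_add_X_pow]
  · rfl

lemma main_eq (n : ℕ) :
    ∑ i ∈ Finset.range (n + 1), (C (((n.choose i) ^ 2 : ℕ) : ℝ)) * X ^ i
      = ∑ i ∈ Finset.range (n / 2 + 1),
          C ((n.factorial / (i.factorial * i.factorial * (n - 2 * i).factorial) : ℕ) : ℝ)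
            * X ^ i * (1 + X) ^ (n - 2 * i) := by
  ext k
  rw [Polynomial.finset_sum_coeff, Polynomial.finset_sum_coeff]
  have lhs : ∑ i ∈ Finset.range (n + 1), (C (((n.choose i) ^ 2 : ℕ) : ℝ) * X ^ i).coeff k
      = if k ∈ Finset.range (n + 1) then (((n.choose k) ^ 2 : ℕ) : ℝ) else 0 := by
    simp only [Polynomial.coeff_C_mul, Polynomial.coeff_X_pow, mul_ite, mul_one, mul_zero]
    rw [Finset.sum_ite_eq (Finset.range (n + 1)) k (fun i => (((n.choose i) ^ 2 : ℕ) : ℝ))]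
  rw [lhs]
  have rhs : ∀ i ∈ Finset.range (n / 2 + 1),
      (C ((n.factorial / (i.factorial * i.factorial * (n - 2 * i).factorial) : ℕ) : ℝ)
        * X ^ i * (1 + X) ^ (n - 2 * i)).coeff k
      = if i ≤ k then ((n.factorial / (i.factorial * i.factorial * (n - 2 * i).factorial) : ℕ) : ℝ)
          * ((n - 2 * i).choose (k - i) : ℝ) else 0 := fun i _ => term_coeff _ i _ k
  rw [Finset.sum_congr rfl rhs]
  have h := coeffId n k
  have h2 : ((if k ≤ n then n.choose k ^ 2 else 0 : ℕ) : ℝ)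
      = ((∑ i ∈ range (n / 2 + 1), if i ≤ k then
          (n.factorial / (i.factorial * i.factorial * (n - 2 * i).factorial))
            * (n - 2 * i).choose (k - i) else 0 : ℕ) : ℝ) := by exact_mod_cast h
  push_cast at h2
  simpa [Finset.mem_range, Nat.lt_succ_iff] using h2

/-- `∑ (binom(n,i))² xⁱ = ∑ multinomial(n; i,i,n-2i) xⁱ(1+x)^{n-2i}`; in particular
this polynomial is γ-positive. -/
theorem stmt_3 (n : ℕ) :
    (∑ i ∈ Finset.range (n + 1), (C (((n.choose i) ^ 2 : ℕ) : ℝ)) * X ^ i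
      = ∑ i ∈ Finset.range (n / 2 + 1),
          C ((n.factorial / (i.factorial * i.factorial * (n - 2 * i).factorial) : ℕ) : ℝ)
            * X ^ i * (1 + X) ^ (n - 2 * i)) ∧
    (∃ γ : ℕ → ℝ, (∀ i, 0 ≤ γ i) ∧
      ∑ i ∈ Finset.range (n + 1), (C (((n.choose i) ^ 2 : ℕ) : ℝ)) * X ^ i
        = ∑ i ∈ Finset.range (n / 2 + 1), C (γ i) * X ^ i * (1 + X) ^ (n - 2 * i)) := by
  refine ⟨main_eq n, fun i => ((n.factorial / (i.factorial * i.factorial * (n - 2 * i).factorial) : ℕ) : ℝ), fun i => by positivity, main_eq n⟩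
end

section
/- If f(x) is a polynomial with positive real coefficients that is palindromic (a_i = a_{n−i} for all i, where n = deg f) and all of whose roots are real, then f is γ-positive: there exist nonnegative reals γ_0, …, γ_{⌊n/2⌋} with f(x) = ∑_{i=0}^{⌊n/2⌋} γ_i xⁱ (1+x)^{n−2i}. -/
open Polynomial Finset


lemma pal_coeff {f : ℝ[X]} (h : f.reverse = f) {i : ℕ} (hi : i ≤ f.natDegree) :
    f.coeff i = f.coeff (f.natDegree - i) := by
  conv_lhs => rw [← h]
  rw [coeff_reverse, revAt_le hi]

lemma pal_eval {f : ℝ[X]} (h : f.reverse = f) {x : ℝ} (hx : x ≠ 0) :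
    x ^ f.natDegree * f.eval x⁻¹ = f.eval x := by
  set n := f.natDegree with hn
  rw [eval_eq_sum_range, eval_eq_sum_range, Finset.mul_sum,
    ← Finset.sum_range_reflect (fun i => f.coeff i * x ^ i) (n + 1)]
  refine Finset.sum_congr rfl fun i hi => ?_
  rw [Finset.mem_range, Nat.lt_succ_iff] at hi
  have h1 : n + 1 - 1 - i = n - i := by omega
  have h2 : f.coeff (n - i) = f.coeff i := by rw [← pal_coeff h hi]
  have h3 : x ^ n * (x⁻¹) ^ i = x ^ (n - i) := by rw [inv_pow, pow_sub₀ x hx hi]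
  rw [h1, h2, ← h3]; ring

lemma root_inv {f : ℝ[X]} (h : f.reverse = f) {x : ℝ} (hx : x ≠ 0) (hr : f.eval x = 0) :
    f.eval x⁻¹ = 0 := by
  have := pal_eval h (inv_ne_zero hx)
  rw [inv_inv, hr, mul_zero] at this
  exact this.symm

lemma eval_neg_one {f : ℝ[X]} (h : f.reverse = f) (ho : Odd f.natDegree) :
    f.eval (-1) = 0 := by
  have h1 := pal_eval h (x := -1) (by norm_num)
  rw [show ((-1 : ℝ)⁻¹) = -1 by norm_num, Odd.neg_one_pow ho] at h1
  linarith

lemma roots_neg {f : ℝ[X]} (hpos : ∀ i ≤ f.natDegree, 0 < f.coeff i) {r : ℝ}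
    (hr : r ∈ f.roots) : r < 0 := by
  by_contra hle
  push_neg at hle
  have hroot : f.eval r = 0 := isRoot_of_mem_roots hr
  have : 0 < f.eval r := by
    rw [eval_eq_sum_range]
    refine Finset.sum_pos' (fun i hi => ?_) ⟨0, Finset.mem_range.mpr (Nat.succ_pos _), ?_⟩
    · exact mul_nonneg (le_of_lt (hpos i (Nat.lt_succ_iff.mp (Finset.mem_range.mp hi))))
        (pow_nonneg hle i)
    · simpa using hpos 0 (Nat.zero_le _)
  linarith

lemma reverse_eq_of_pal {f : ℝ[X]}
    (h : ∀ i ≤ f.natDegree, f.coeff i = f.coeff (f.natDegree - i)) : f.reverse = f := by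
  ext i
  rcases le_or_gt i f.natDegree with hi | hi
  · rw [coeff_reverse, revAt_le hi, ← h i hi]
  · rw [coeff_reverse, revAt_eq_self_of_lt hi]



lemma prod_coeff_pos (s : Multiset ℝ) (hs : ∀ r ∈ s, 0 < r) :
    ∀ i ≤ Multiset.card s, 0 < ((s.map fun r => X + C r).prod).coeff i := by
  induction s using Multiset.induction_on with
  | empty =>
    intro i hi
    simp only [Multiset.card_zero, Nat.le_zero] at hi
    subst hi; simp
  | cons a t IH =>
    intro i hi
    have ha : 0 < a := hs a (Multiset.mem_cons_self a t)
    have ht : ∀ r ∈ t, 0 < r := fun r hr => hs r (Multiset.mem_cons_of_mem hr)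
    have IH' := IH ht
    set P : ℝ[X] := (t.map fun r => X + C r).prod with hP
    have hdeg : P.natDegree = Multiset.card t := by
      rw [hP, natDegree_multiset_prod_of_monic]
      · simp [Multiset.map_map, Function.comp]
      · intro p hp
        obtain ⟨r, _, rfl⟩ := Multiset.mem_map.mp hp
        exact monic_X_add_C r
    have hnn : ∀ m, 0 ≤ P.coeff m := by
      intro m
      rcases le_or_gt m (Multiset.card t) with hm | hm
      · exact le_of_lt (IH' m hm)
      · rw [coeff_eq_zero_of_natDegree_lt (by omega)]
    rw [Multiset.map_cons, Multiset.prod_cons]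
    have hrw : ((X + C a) * P).coeff i = (X * P).coeff i + a * P.coeff i := by
      rw [add_mul, coeff_add, coeff_C_mul]
    rw [hrw]
    rw [Multiset.card_cons] at hi
    rcases Nat.eq_zero_or_pos i with rfl | hipos
    · simpa [coeff_X_mul_zero] using mul_pos ha (IH' 0 (Nat.zero_le _))
    · obtain ⟨j, rfl⟩ := Nat.exists_eq_add_of_lt hipos
      simp only [zero_add, coeff_X_mul]
      have : 0 < P.coeff j := IH' j (by omega)
      have := mul_nonneg ha.le (hnn (j + 1))
      linarith

lemma coeff_pos_of_roots {g : ℝ[X]} (h0 : 0 < g.leadingCoeff)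
    (hcard : Multiset.card g.roots = g.natDegree) (hneg : ∀ r ∈ g.roots, r < 0) :
    ∀ i ≤ g.natDegree, 0 < g.coeff i := by
  intro i hi
  have hsplit : Splits g := splits_iff_card_roots.mpr hcard
  have hg := hsplit.eq_prod_roots
  have hmap : g.roots.map (fun a => X - C a) = (g.roots.map (fun a => -a)).map fun r => X + C r := by
    rw [Multiset.map_map]
    exact Multiset.map_congr rfl fun r _ => by simp [sub_eq_add_neg]
  set s : Multiset ℝ := g.roots.map fun a => -a with hsdef
  have hcards : Multiset.card s = g.natDegree := by rw [hsdef, Multiset.card_map, hcard]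
  have hspos : ∀ r ∈ s, 0 < r := by
    intro r hr
    obtain ⟨a, ha, rfl⟩ := Multiset.mem_map.mp hr
    linarith [hneg a ha]
  have := prod_coeff_pos s hspos i (by omega)
  rw [hg, coeff_C_mul, hmap]
  exact mul_pos h0 this

lemma reverse_X_add_C (a : ℝ) : (X + C a).reverse = C a * X + 1 := by
  ext i
  rw [coeff_reverse, natDegree_X_add_C]
  match i with
  | 0 => simp [revAt_le, coeff_one, coeff_C, coeff_X]
  | 1 => simp [revAt_le, coeff_one, coeff_C, coeff_X]
  | (j+2) =>
    rw [revAt_eq_self_of_lt (by omega)]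
    simp [coeff_one, coeff_C, coeff_X]

lemma peel {f d g : ℝ[X]} (hf0 : f ≠ 0) (hfg : f = d * g) (hd : d.Monic)
    (hdrev : d.reverse = d) (hrev : f.reverse = f)
    (hpos : ∀ i ≤ f.natDegree, 0 < f.coeff i)
    (hcard : Multiset.card f.roots = f.natDegree)
    (hdcard : Multiset.card d.roots = d.natDegree) :
    g ≠ 0 ∧ g.natDegree = f.natDegree - d.natDegree ∧ g.reverse = g ∧
      Multiset.card g.roots = g.natDegree ∧ (∀ i ≤ g.natDegree, 0 < g.coeff i) := by
  have hd0 : d ≠ 0 := hd.ne_zero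
  have hg0 : g ≠ 0 := fun h => hf0 (by rw [hfg, h, mul_zero])
  have hdegs : f.natDegree = d.natDegree + g.natDegree := by
    rw [hfg, natDegree_mul hd0 hg0]
  have hgdeg : g.natDegree = f.natDegree - d.natDegree := by omega
  have hgrev : g.reverse = g := by
    have h1 : f.reverse = d.reverse * g.reverse := by rw [hfg, reverse_mul_of_domain]
    rw [hrev, hdrev, hfg] at h1
    exact (mul_left_cancel₀ hd0 h1).symm
  have hroots : f.roots = d.roots + g.roots := by rw [hfg, roots_mul (hfg ▸ hf0)]
  have hgcard : Multiset.card g.roots = g.natDegree := by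
    have := congrArg Multiset.card hroots
    rw [Multiset.card_add, hcard, hdcard] at this
    omega
  have hglead : 0 < g.leadingCoeff := by
    have h1 : f.leadingCoeff = g.leadingCoeff := by
      rw [hfg, leadingCoeff_mul, hd.leadingCoeff, one_mul]
    rw [← h1]
    exact hpos f.natDegree le_rfl
  have hgneg : ∀ r ∈ g.roots, r < 0 := fun r hr =>
    roots_neg hpos (by rw [hroots]; exact Multiset.mem_add.mpr (Or.inr hr))
  exact ⟨hg0, hgdeg, hgrev, hgcard, coeff_pos_of_roots hglead hgcard hgneg⟩

lemma key : ∀ n : ℕ, ∀ f : ℝ[X], f.natDegree = n → (∀ i ≤ n, 0 < f.coeff i) →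
    f.reverse = f → Multiset.card f.roots = n →
    ∃ γ : ℕ → ℝ, (∀ i, 0 ≤ γ i) ∧
      f = ∑ i ∈ Finset.range (n / 2 + 1), C (γ i) * X ^ i * (1 + X) ^ (n - 2 * i) := by
  intro n
  induction n using Nat.strong_induction_on with
  | _ n IH =>
  intro f hdeg hpos hrev hcard
  have hf0 : f ≠ 0 := fun h => by simpa [h] using hpos 0 (Nat.zero_le n)
  have hpos' : ∀ i ≤ f.natDegree, 0 < f.coeff i :=
    fun i hi => hpos i (le_of_le_of_eq hi hdeg)
  have hcard' : Multiset.card f.roots = f.natDegree := by rw [hcard, hdeg]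
  rcases Nat.eq_zero_or_pos n with rfl | hn1
  · refine ⟨fun _ => f.coeff 0, fun i => (hpos 0 le_rfl).le, ?_⟩
    rw [Finset.sum_range_one]
    simpa using eq_C_of_natDegree_eq_zero hdeg
  rcases Nat.even_or_odd n with he | ho
  · -- even case
    obtain ⟨k, hk⟩ := he
    have hn2 : 2 ≤ n := by omega
    -- pick a root
    have hrn0 : f.roots ≠ 0 := by
      intro h
      rw [h, Multiset.card_zero] at hcard
      omega
    obtain ⟨r, hr⟩ := Multiset.exists_mem_of_ne_zero hrn0
    obtain ⟨s, hspos, hroot1⟩ : ∃ s : ℝ, 0 < s ∧ f.eval (-s) = 0 :=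
      ⟨-r, by linarith [roots_neg hpos' hr], by rw [neg_neg]; exact isRoot_of_mem_roots hr⟩
    -- find the paired root and the quadratic divisor
    obtain ⟨t, htpos, hst, g, hfg⟩ :
        ∃ t : ℝ, 0 < t ∧ s * t = 1 ∧ ∃ g, f = (X - C (-s)) * (X - C (-t)) * g := by
      rcases eq_or_ne s 1 with rfl | hs1
      · obtain ⟨g1, hg1⟩ := dvd_iff_isRoot.mpr (show f.IsRoot (-1) by simpa using hroot1)
        have hd1 : (X - C (-1) : ℝ[X]) = X + C 1 := by rw [map_neg, sub_neg_eq_add]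
        have hdrev1 : (X - C (-1) : ℝ[X]).reverse = X - C (-1) := by
          rw [hd1, reverse_X_add_C]; simp
        obtain ⟨hg10, hg1deg, hg1rev, -, -⟩ := peel hf0 hg1 (monic_X_sub_C _) hdrev1 hrev
          hpos' hcard' (by rw [roots_X_sub_C, natDegree_X_sub_C]; simp)
        have hodd : Odd g1.natDegree := by
          rw [hg1deg, hdeg, natDegree_X_sub_C]
          exact ⟨k - 1, by omega⟩
        obtain ⟨g2, hg2⟩ := dvd_iff_isRoot.mpr (eval_neg_one hg1rev hodd)
        exact ⟨1, one_pos, mul_one 1, g2, by rw [hg1, hg2, mul_assoc]⟩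
      · refine ⟨s⁻¹, inv_pos.mpr hspos, mul_inv_cancel₀ (ne_of_gt hspos), ?_⟩
        have hroot2 : f.eval (-s⁻¹) = 0 := by
          have := root_inv hrev (x := -s) (by simp [ne_of_gt hspos]) hroot1
          rwa [inv_neg] at this
        have hne : (-s : ℝ) - -s⁻¹ ≠ 0 := by
          intro h
          have h2 : s = s⁻¹ := by linarith
          have h3 : s * s = 1 := by
            nth_rewrite 2 [h2]
            exact mul_inv_cancel₀ (ne_of_gt hspos)
          rcases lt_or_gt_of_ne hs1 with h4 | h4
          · nlinarith
          · nlinarith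
        have hcop : IsCoprime (X - C (-s) : ℝ[X]) (X - C (-s⁻¹)) :=
          isCoprime_X_sub_C_of_isUnit_sub (isUnit_iff_ne_zero.mpr hne)
        exact hcop.mul_dvd (dvd_iff_isRoot.mpr hroot1) (dvd_iff_isRoot.mpr hroot2)
    -- properties of the quadratic d
    set d : ℝ[X] := (X - C (-s)) * (X - C (-t)) with hd_def
    have hdX1 : (X - C (-s) : ℝ[X]) = X + C s := by rw [map_neg, sub_neg_eq_add]
    have hdX2 : (X - C (-t) : ℝ[X]) = X + C t := by rw [map_neg, sub_neg_eq_add]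
    have hCst : (C s * C t : ℝ[X]) = 1 := by rw [← C_mul, hst, C_1]
    have hdmonic : d.Monic := (monic_X_sub_C _).mul (monic_X_sub_C _)
    have hddeg : d.natDegree = 2 := by
      rw [hd_def, natDegree_mul (X_sub_C_ne_zero _) (X_sub_C_ne_zero _),
        natDegree_X_sub_C, natDegree_X_sub_C]
    have hdrev : d.reverse = d := by
      rw [hd_def, reverse_mul_of_domain, hdX1, hdX2, reverse_X_add_C, reverse_X_add_C]
      linear_combination (X ^ 2 - 1 : ℝ[X]) * hCst
    have hdcard : Multiset.card d.roots = d.natDegree := by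
      rw [hd_def, roots_mul (mul_ne_zero (X_sub_C_ne_zero _) (X_sub_C_ne_zero _)),
        roots_X_sub_C, roots_X_sub_C, ← hd_def, hddeg]
      simp
    obtain ⟨hg0, hgdeg, hgrev, hgcard, hgpos⟩ :=
      peel hf0 hfg hdmonic hdrev hrev hpos' hcard' hdcard
    rw [hdeg, hddeg] at hgdeg
    obtain ⟨γ', hnn', hsum'⟩ := IH (n - 2) (by omega) g hgdeg
      (fun i hi => hgpos i (by omega)) hgrev (by rw [hgcard, hgdeg])
    rw [show (n - 2) / 2 + 1 = n / 2 from by omega] at hsum'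
    have hc2 : 2 ≤ s + t := by nlinarith [sq_nonneg (s - t)]
    have hq : d = (1 + X) ^ 2 + C (s + t - 2) * X := by
      rw [hd_def, hdX1, hdX2]
      simp only [C_sub, C_add, map_ofNat]
      linear_combination hCst
    refine ⟨fun i => (if i < n / 2 then γ' i else 0) +
      (s + t - 2) * (if i = 0 then 0 else γ' (i - 1)), ?_, ?_⟩
    · intro i
      refine add_nonneg ?_ (mul_nonneg (by linarith) ?_) <;> split_ifs <;>
        first | exact hnn' _ | exact le_refl 0
    · simp only [C_add, C_mul, add_mul, Finset.sum_add_distrib]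
      rw [Finset.sum_range_succ, Finset.sum_range_succ']
      simp only [lt_self_iff_false, if_false, if_true, Nat.add_eq_zero, one_ne_zero,
        and_false, Nat.add_sub_cancel, C_0, zero_mul, mul_zero, add_zero, if_pos]
      rw [hfg, hq, hsum', add_mul, Finset.mul_sum, Finset.mul_sum]
      refine congrArg₂ (· + ·) ?_ ?_
      · refine Finset.sum_congr rfl fun i hi => ?_
        rw [Finset.mem_range] at hi
        rw [if_pos hi, show n - 2 * i = (n - 2 - 2 * i) + 2 from by omega, pow_add]
        ring
      · refine Finset.sum_congr rfl fun i hi => ?_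
        rw [Finset.mem_range] at hi
        rw [show n - 2 * (i + 1) = n - 2 - 2 * i from by omega, pow_succ]
        ring
  · -- odd case
    obtain ⟨k, hk⟩ := ho
    have hone : f.eval (-1) = 0 := eval_neg_one hrev (by rw [hdeg]; exact ⟨k, hk⟩)
    obtain ⟨g, hfg⟩ := dvd_iff_isRoot.mpr hone
    have hd1 : (X - C (-1) : ℝ[X]) = X + C 1 := by rw [map_neg, sub_neg_eq_add]
    have hdrev1 : (X - C (-1) : ℝ[X]).reverse = X - C (-1) := by
      rw [hd1, reverse_X_add_C]; simp
    obtain ⟨hg0, hgdeg, hgrev, hgcard, hgpos⟩ := peel hf0 hfg (monic_X_sub_C _) hdrev1 hrev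
      hpos' hcard' (by rw [roots_X_sub_C, natDegree_X_sub_C]; simp)
    rw [hdeg, natDegree_X_sub_C] at hgdeg
    obtain ⟨γ', hnn', hsum'⟩ := IH (n - 1) (by omega) g hgdeg
      (fun i hi => hgpos i (by omega)) hgrev (by rw [hgcard, hgdeg])
    rw [show (n - 1) / 2 + 1 = n / 2 + 1 from by omega] at hsum'
    refine ⟨γ', hnn', ?_⟩
    rw [hfg, hsum', Finset.mul_sum]
    refine Finset.sum_congr rfl fun i hi => ?_
    rw [Finset.mem_range] at hi
    rw [hd1, show n - 2 * i = (n - 1 - 2 * i) + 1 from by omega, pow_succ]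
    have hC1 : (C 1 : ℝ[X]) = 1 := C_1
    rw [hC1]
    ring

/-- A palindromic polynomial with positive coefficients all of whose roots are real
is γ-positive. -/
theorem stmt_5 (f : Polynomial ℝ) (n : ℕ) (hn : n = f.natDegree)
    (hpos : ∀ i ≤ n, 0 < f.coeff i)
    (hpal : ∀ i ≤ n, f.coeff i = f.coeff (n - i))
    (hreal : Multiset.card f.roots = n) :
    ∃ γ : ℕ → ℝ, (∀ i, 0 ≤ γ i) ∧
      f = ∑ i ∈ Finset.range (n / 2 + 1), C (γ i) * X ^ i * (1 + X) ^ (n - 2 * i) := by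
  subst hn
  exact key f.natDegree f rfl hpos (reverse_eq_of_pal hpal) hreal
end

section
/- For every odd positive integer n, the polynomial ∑_{i≥0} binom(n+1, 2i) xⁱ is real-rooted, and hence (being palindromic with positive coefficients) γ-positive. -/
open Polynomial

lemma aux_even_filter {M : Type*} [AddCommMonoid M] (m : ℕ) (f : ℕ → M) :
    ∑ k ∈ (Finset.range (m + 1)).filter (fun k => Even k), f k
      = ∑ j ∈ Finset.range (m / 2 + 1), f (2 * j) := by
  refine Finset.sum_nbij' (fun k => k / 2) (fun j => 2 * j) ?_ ?_ ?_ ?_ ?_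
  · intro a ha
    simp only [Finset.mem_filter, Finset.mem_range] at ha ⊢
    omega
  · intro a ha
    simp only [Finset.mem_filter, Finset.mem_range] at ha ⊢
    exact ⟨by omega, even_two_mul a⟩
  · intro a ha
    simp only [Finset.mem_filter, Finset.mem_range] at ha
    obtain ⟨-, c, hc⟩ := ha
    omega
  · intro a _; omega
  · intro a ha
    simp only [Finset.mem_filter, Finset.mem_range] at ha
    obtain ⟨-, c, hc⟩ := ha
    congr 1; omega

lemma aux_even_binom' {R : Type*} [CommRing R] (a b : R) (m : ℕ) :
    (a + b) ^ m + (a - b) ^ m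
      = 2 * ∑ k ∈ Finset.range (m / 2 + 1),
          (m.choose (2 * k) : R) * b ^ (2 * k) * a ^ (m - 2 * k) := by
  have h1 : (a + b) ^ m = ∑ k ∈ Finset.range (m + 1),
      b ^ k * a ^ (m - k) * (m.choose k : R) := by
    rw [add_comm a b, add_pow]
  have h2 : (a - b) ^ m = ∑ k ∈ Finset.range (m + 1),
      (-1 : R) ^ k * (b ^ k * a ^ (m - k) * (m.choose k : R)) := by
    rw [sub_eq_add_neg, add_comm a (-b), add_pow]
    refine Finset.sum_congr rfl fun k _ => ?_
    rw [neg_pow]; ring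
  rw [h1, h2, ← Finset.sum_add_distrib]
  have key : ∀ k ∈ Finset.range (m + 1),
      b ^ k * a ^ (m - k) * (m.choose k : R)
        + (-1 : R) ^ k * (b ^ k * a ^ (m - k) * (m.choose k : R))
      = if Even k then 2 * ((m.choose k : R) * b ^ k * a ^ (m - k)) else 0 := by
    intro k _
    rcases Nat.even_or_odd k with h | h
    · rw [if_pos h, h.neg_one_pow]; ring
    · rw [if_neg (Nat.not_even_iff_odd.mpr h), h.neg_one_pow]; ring
  rw [Finset.sum_congr rfl key, Finset.sum_ite, Finset.sum_const_zero, add_zero,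
    aux_even_filter m (fun k => 2 * ((m.choose k : R) * b ^ k * a ^ (m - k))),
    Finset.mul_sum]

lemma aux_eval_trig (m : ℕ) (θ : ℝ) (hc : Real.cos θ ≠ 0) :
    ∑ i ∈ Finset.range (m + 1), ((2 * m).choose (2 * i) : ℝ) * (-(Real.tan θ) ^ 2) ^ i
      = Real.cos (2 * m * θ) / (Real.cos θ) ^ (2 * m) := by
  have c0 : (Real.cos θ : ℂ) ≠ 0 := Complex.ofReal_ne_zero.mpr hc
  have c0' : Complex.cos ↑θ ≠ 0 := by rw [← Complex.ofReal_cos]; exact c0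
  have e1 : (1 : ℂ) + (Real.tan θ : ℂ) * Complex.I
      = Complex.exp (θ * Complex.I) / (Real.cos θ : ℂ) := by
    rw [Complex.exp_mul_I, ← Complex.ofReal_cos, ← Complex.ofReal_sin,
      show Real.tan θ = Real.sin θ / Real.cos θ from Real.tan_eq_sin_div_cos θ]
    push_cast
    field_simp
  have e2 : (1 : ℂ) - (Real.tan θ : ℂ) * Complex.I
      = Complex.exp (-(↑θ * Complex.I)) / (Real.cos θ : ℂ) := by
    have hneg : -(↑θ * Complex.I) = ((-θ : ℝ) : ℂ) * Complex.I := by push_cast; ring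
    rw [hneg, Complex.exp_mul_I, ← Complex.ofReal_cos, ← Complex.ofReal_sin,
      Real.cos_neg, Real.sin_neg,
      show Real.tan θ = Real.sin θ / Real.cos θ from Real.tan_eq_sin_div_cos θ]
    push_cast
    field_simp
    ring
  set x : ℝ := -(Real.tan θ) ^ 2 with hxdef
  have key := aux_even_binom' (1 : ℂ) ((Real.tan θ : ℂ) * Complex.I) (2 * m)
  rw [show 2 * m / 2 = m by omega] at key
  simp only [one_pow, mul_one] at key
  have powI : ∀ k : ℕ, ((Real.tan θ : ℂ) * Complex.I) ^ (2 * k) = ((x : ℝ) : ℂ) ^ k := by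
    intro k
    rw [pow_mul, mul_pow, Complex.I_sq, hxdef]
    push_cast
    ring_nf
  rw [Finset.sum_congr rfl (fun k _ => by rw [powI k])] at key
  apply Complex.ofReal_injective
  apply mul_left_cancel₀ (two_ne_zero : (2 : ℂ) ≠ 0)
  have hcast : ((∑ i ∈ Finset.range (m + 1), ((2 * m).choose (2 * i) : ℝ) * x ^ i : ℝ) : ℂ)
      = ∑ k ∈ Finset.range (m + 1), ((2 * m).choose (2 * k) : ℂ) * ((x : ℝ) : ℂ) ^ k := by
    push_cast
    rfl
  have harg1 : ((2 * m : ℕ) : ℂ) * (↑θ * Complex.I) = ((2 * (m : ℝ) * θ : ℝ) : ℂ) * Complex.I := by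
    push_cast; ring
  have harg2 : ((2 * m : ℕ) : ℂ) * -(↑θ * Complex.I)
      = -((2 * (m : ℝ) * θ : ℝ) : ℂ) * Complex.I := by
    push_cast; ring
  rw [hcast, ← key, e1, e2, div_pow, div_pow, ← add_div,
    ← Complex.exp_nat_mul, ← Complex.exp_nat_mul, harg1, harg2, ← Complex.two_cos,
    ← Complex.ofReal_cos]
  push_cast
  ring

/-- For odd `n`, the polynomial `∑ binom(n+1, 2i) xⁱ` is real-rooted, hence γ-positive. -/
theorem stmt_6 (n : ℕ) (hn : Odd n) (hpos : 0 < n)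
    (p : Polynomial ℝ)
    (hp : p = ∑ i ∈ Finset.range ((n + 1) / 2 + 1), C ((((n + 1).choose (2 * i)) : ℕ) : ℝ) * X ^ i) :
    Multiset.card p.roots = p.natDegree ∧
    ∃ γ : ℕ → ℝ, (∀ i, 0 ≤ γ i) ∧
      p = ∑ i ∈ Finset.range ((n + 1) / 2 / 2 + 1),
            C (γ i) * X ^ i * (1 + X) ^ ((n + 1) / 2 - 2 * i) := by
  set m : ℕ := (n + 1) / 2 with hmdef
  obtain ⟨j, hj⟩ := hn
  have hm : n + 1 = 2 * m := by omega
  have hmpos : 0 < m := by omega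
  rw [hm] at hp
  -- evaluation formula
  have hev : ∀ x : ℝ, p.eval x
      = ∑ i ∈ Finset.range (m + 1), ((2 * m).choose (2 * i) : ℝ) * x ^ i := by
    intro x
    rw [hp, eval_finset_sum]
    simp
  -- coefficients
  have hcoeff : ∀ j, p.coeff j
      = if j < m + 1 then ((2 * m).choose (2 * j) : ℝ) else 0 := by
    intro j
    rw [hp, finset_sum_coeff]
    simp only [coeff_C_mul, coeff_X_pow, mul_ite, mul_one, mul_zero]
    rw [Finset.sum_ite_eq (Finset.range (m + 1)) j (fun i => ((2 * m).choose (2 * i) : ℝ))]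
    simp [Finset.mem_range]
  have hcm : p.coeff m = 1 := by
    rw [hcoeff m, if_pos (by omega)]
    norm_num [Nat.choose_self]
  have hpne : p ≠ 0 := fun h => by simp [h] at hcm
  have hdeg : p.natDegree = m := by
    refine le_antisymm ?_ (le_natDegree_of_ne_zero (by rw [hcm]; norm_num))
    refine Polynomial.natDegree_le_iff_coeff_eq_zero.mpr fun j hj' => ?_
    rw [hcoeff j, if_neg (by omega)]
  -- the roots
  have pi_pos := Real.pi_pos
  have hθmem : ∀ k < m, (2 * k + 1) * Real.pi / (4 * m) ∈ Set.Ioo (-(Real.pi/2)) (Real.pi/2) := by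
    intro k hk
    constructor
    · have : 0 < (2 * k + 1) * Real.pi / (4 * m) := by positivity
      linarith
    · rw [div_lt_iff₀ (by positivity)]
      have h1 : (2 * k + 1 : ℝ) < 2 * m := by
        have : (k : ℝ) + 1 ≤ m := by exact_mod_cast hk
        linarith
      nlinarith
  have hcosne : ∀ k < m, Real.cos ((2 * k + 1) * Real.pi / (4 * m)) ≠ 0 := by
    intro k hk
    exact ne_of_gt (Real.cos_pos_of_mem_Ioo (hθmem k hk))
  have hroot : ∀ k < m, p.eval (-(Real.tan ((2 * k + 1) * Real.pi / (4 * m))) ^ 2) = 0 := by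
    intro k hk
    rw [hev, aux_eval_trig m _ (hcosne k hk)]
    have harg : 2 * (m : ℝ) * ((2 * k + 1) * Real.pi / (4 * m)) = (2 * k + 1) * Real.pi / 2 := by
      have hm0 : (m : ℝ) ≠ 0 := by positivity
      field_simp
      ring
    rw [harg]
    have : Real.cos ((2 * k + 1) * Real.pi / 2) = 0 := by
      rw [Real.cos_eq_zero_iff]
      exact ⟨(k : ℤ), by push_cast; ring⟩
    rw [this, zero_div]
  have htanpos : ∀ k < m, 0 < Real.tan ((2 * k + 1) * Real.pi / (4 * m)) := by
    intro k hk
    exact Real.tan_pos_of_pos_of_lt_pi_div_two (by positivity) (hθmem k hk).2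
  have hinj : Set.InjOn (fun k : ℕ => -(Real.tan ((2 * k + 1) * Real.pi / (4 * m))) ^ 2)
      ↑(Finset.range m) := by
    intro a ha b hb hab
    simp only [Finset.coe_range, Set.mem_Iio] at ha hb
    dsimp only at hab
    have h1 : Real.tan ((2 * a + 1) * Real.pi / (4 * m))
        = Real.tan ((2 * b + 1) * Real.pi / (4 * m)) := by
      have := htanpos a ha
      have := htanpos b hb
      nlinarith
    have h2 := Real.injOn_tan (hθmem a ha) (hθmem b hb) h1
    have hm0 : (4 * (m : ℝ)) ≠ 0 := by positivity
    rw [div_eq_div_iff hm0 hm0] at h2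
    have h4 := mul_right_cancel₀ hm0 h2
    have h5 := mul_right_cancel₀ (ne_of_gt pi_pos) h4
    have h6 : (a : ℝ) = b := by linarith
    exact_mod_cast h6
  -- card roots
  have hcard : Multiset.card p.roots = p.natDegree := by
    refine le_antisymm (Polynomial.card_roots' p) ?_
    rw [hdeg]
    have hsub : (Finset.range m).image
        (fun k : ℕ => -(Real.tan ((2 * k + 1) * Real.pi / (4 * m))) ^ 2) ⊆ p.roots.toFinset := by
      intro x hx
      simp only [Finset.mem_image, Finset.mem_range] at hx
      obtain ⟨k, hk, rfl⟩ := hx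
      rw [Multiset.mem_toFinset, Polynomial.mem_roots hpne]
      exact hroot k hk
    calc m = ((Finset.range m).image
          (fun k : ℕ => -(Real.tan ((2 * k + 1) * Real.pi / (4 * m))) ^ 2)).card := by
            rw [Finset.card_image_of_injOn hinj, Finset.card_range]
      _ ≤ p.roots.toFinset.card := Finset.card_le_card hsub
      _ ≤ Multiset.card p.roots := p.roots.toFinset_card_le
  have hq : p = ∑ i ∈ Finset.range (m / 2 + 1),
      C ((4 : ℝ) ^ i * (m.choose (2 * i) : ℝ)) * X ^ i * (1 + X) ^ (m - 2 * i) := by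
    apply Polynomial.eq_of_infinite_eval_eq
    refine Set.Infinite.mono ?_ (Set.Ici_infinite (0 : ℝ))
    intro x hx
    simp only [Set.mem_setOf_eq]
    have hx0 : (0 : ℝ) ≤ x := hx
    have hb : Real.sqrt x ^ 2 = x := Real.sq_sqrt hx0
    set b : ℝ := Real.sqrt x with hbdef
    have h1 := aux_even_binom' (1 : ℝ) b (2 * m)
    rw [show 2 * m / 2 = m by omega] at h1
    simp only [one_pow, mul_one] at h1
    have h2 := aux_even_binom' ((1 : ℝ) + b ^ 2) (2 * b) m
    have e1 : p.eval x = ∑ i ∈ Finset.range (m + 1),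
        ((2 * m).choose (2 * i) : ℝ) * b ^ (2 * i) := by
      rw [hev x]
      exact Finset.sum_congr rfl fun i _ => by rw [pow_mul, hb]
    have e2 : eval x (∑ i ∈ Finset.range (m / 2 + 1),
          C ((4 : ℝ) ^ i * (m.choose (2 * i) : ℝ)) * X ^ i * (1 + X) ^ (m - 2 * i))
        = ∑ i ∈ Finset.range (m / 2 + 1),
          (m.choose (2 * i) : ℝ) * (2 * b) ^ (2 * i) * (1 + b ^ 2) ^ (m - 2 * i) := by
      rw [eval_finset_sum]
      refine Finset.sum_congr rfl fun i _ => ?_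
      simp only [eval_mul, eval_pow, eval_C, eval_X, eval_add, eval_one]
      rw [pow_mul, show (2 * b) ^ 2 = 4 * b ^ 2 by ring, hb, mul_pow]
      ring
    have hsq1 : ((1 : ℝ) + b ^ 2) + 2 * b = (1 + b) ^ 2 := by ring
    have hsq2 : ((1 : ℝ) + b ^ 2) - 2 * b = (1 - b) ^ 2 := by ring
    rw [hsq1, hsq2, ← pow_mul, ← pow_mul] at h2
    rw [e1, e2]
    linarith [h1, h2]
  exact ⟨hcard, fun k => (4 : ℝ) ^ k * (m.choose (2 * k) : ℝ), fun i => by positivity, hq⟩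
end

section
/- The product ∏_{α ∈ [n]×[n+1]} (r(α)+2)/r(α) equals (2n+1)·C_n·C_{n+1}, where r((a,b)) = a + b − 1 for (a,b) ∈ [n]×[n+1], and C_m = binom(2m,m)/(m+1) is the m-th Catalan number. -/
open Finset Nat

private lemma prodA (a m : ℕ) :
    ∏ b ∈ Finset.range m, ((a + b + 1 : ℕ) : ℚ) = ((a + m).factorial : ℚ) / a.factorial := by
  induction m with
  | zero => simp [div_self (Nat.cast_ne_zero.mpr a.factorial_ne_zero : (a.factorial:ℚ) ≠ 0)]
  | succ m ih =>
    rw [Finset.prod_range_succ, ih]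
    have h : (a.factorial : ℚ) ≠ 0 := Nat.cast_ne_zero.mpr a.factorial_ne_zero
    have : (a + (m + 1)).factorial = (a + m + 1) * (a + m).factorial := by
      rw [← Nat.add_assoc, Nat.factorial_succ]
    rw [this]
    field_simp
    push_cast; ring

private lemma keylem (n a : ℕ) :
    ∏ b ∈ Finset.range (n + 1), (((a + b + 1 + 2 : ℕ) : ℚ) / ((a + b + 1 : ℕ) : ℚ))
      = (((a + n + 2) * (a + n + 3) : ℕ) : ℚ) / (((a + 1) * (a + 2) : ℕ) : ℚ) := by
  rw [Finset.prod_div_distrib]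
  have e1 : ∏ b ∈ Finset.range (n + 1), ((a + b + 1 + 2 : ℕ) : ℚ)
      = ∏ b ∈ Finset.range (n + 1), (((a + 2) + b + 1 : ℕ) : ℚ) := by
    apply Finset.prod_congr rfl
    intro b _
    congr 1
    omega
  rw [e1, prodA, prodA]
  have h1 : ((a + (n+1)).factorial : ℚ) ≠ 0 := Nat.cast_ne_zero.mpr (Nat.factorial_ne_zero _)
  have h2 : (a.factorial : ℚ) ≠ 0 := Nat.cast_ne_zero.mpr (Nat.factorial_ne_zero _)
  have h3 : ((a+2).factorial : ℚ) ≠ 0 := Nat.cast_ne_zero.mpr (Nat.factorial_ne_zero _)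
  have e2 : ((a + 2) + (n + 1)).factorial = ((a+n+3) * ((a+n+2) * (a + (n+1)).factorial)) := by
    have : (a + 2) + (n + 1) = (a + (n+1)) + 1 + 1 := by omega
    rw [this, Nat.factorial_succ, Nat.factorial_succ]
    have : a + (n+1) + 1 + 1 = a + n + 3 := by omega
    have h2 : a + (n+1) + 1 = a + n + 2 := by omega
    rw [this, h2]
  have e3 : (a + 2).factorial = (a + 2) * ((a + 1) * a.factorial) := by
    rw [Nat.factorial_succ, Nat.factorial_succ]
  rw [e2, e3]
  push_cast
  field_simp

/-- `∏_{α ∈ [n]×[n+1]} (r(α)+2)/r(α) = (2n+1)·Cₙ·C_{n+1}`, where the rank of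
`(a,b)` (with `1 ≤ a ≤ n`, `1 ≤ b ≤ n+1`) is `a+b-1`. -/
theorem stmt_14 (n : ℕ) :
    ∏ p ∈ (Finset.univ : Finset (Fin n × Fin (n + 1))),
        ((((p.1 : ℕ) + (p.2 : ℕ) + 1 + 2 : ℕ) : ℚ) / (((p.1 : ℕ) + (p.2 : ℕ) + 1 : ℕ) : ℚ))
      = ((2 * n + 1) * catalan n * catalan (n + 1) : ℕ) := by
  rw [Fintype.prod_prod_type]
  have step1 : ∀ a : Fin n,
      (∏ b : Fin (n+1), ((((a : ℕ) + (b : ℕ) + 1 + 2 : ℕ) : ℚ) / (((a : ℕ) + (b : ℕ) + 1 : ℕ) : ℚ)))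
      = ((((a:ℕ) + n + 2) * ((a:ℕ) + n + 3) : ℕ) : ℚ) / ((((a:ℕ) + 1) * ((a:ℕ) + 2) : ℕ) : ℚ) := by
    intro a
    rw [Fin.prod_univ_eq_prod_range (fun b => (((((a:ℕ)) + b + 1 + 2 : ℕ) : ℚ) / ((((a:ℕ)) + b + 1 : ℕ) : ℚ)))]
    exact keylem n (a : ℕ)
  simp only [step1]
  rw [Fin.prod_univ_eq_prod_range (fun a => (((a + n + 2) * (a + n + 3) : ℕ) : ℚ) / (((a + 1) * (a + 2) : ℕ) : ℚ))]
  rw [Finset.prod_div_distrib]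
  have e1 : ∏ a ∈ Finset.range n, (((a + n + 2) * (a + n + 3) : ℕ) : ℚ)
      = (∏ a ∈ Finset.range n, (((n+1) + a + 1 : ℕ) : ℚ)) * (∏ a ∈ Finset.range n, (((n+2) + a + 1 : ℕ) : ℚ)) := by
    rw [← Finset.prod_mul_distrib]
    apply Finset.prod_congr rfl
    intro a _
    push_cast; ring
  have e2 : ∏ a ∈ Finset.range n, (((a + 1) * (a + 2) : ℕ) : ℚ)
      = (∏ a ∈ Finset.range n, ((0 + a + 1 : ℕ) : ℚ)) * (∏ a ∈ Finset.range n, ((1 + a + 1 : ℕ) : ℚ)) := by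
    rw [← Finset.prod_mul_distrib]
    apply Finset.prod_congr rfl
    intro a _
    push_cast; ring
  rw [e1, e2, prodA, prodA, prodA, prodA]
  -- now it's a factorial identity
  have hc1 : ((n + 1) * catalan n : ℕ) = n.centralBinom := succ_mul_catalan_eq_centralBinom _
  have hc2 : ((n + 2) * catalan (n+1) : ℕ) = (n+1).centralBinom := succ_mul_catalan_eq_centralBinom _
  have hb1 : n.centralBinom * (n.factorial * n.factorial) = (2*n).factorial := by
    rw [Nat.centralBinom]
    have := Nat.choose_mul_factorial_mul_factorial (show n ≤ 2*n by omega)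
    simpa [Nat.two_mul, mul_assoc] using this
  have hb2 : (n+1).centralBinom * ((n+1).factorial * (n+1).factorial) = (2*(n+1)).factorial := by
    rw [Nat.centralBinom]
    have := Nat.choose_mul_factorial_mul_factorial (show n+1 ≤ 2*(n+1) by omega)
    simpa [Nat.two_mul, mul_assoc] using this
  have hq0 : ∀ m : ℕ, ((m.factorial : ℚ)) ≠ 0 := fun m => Nat.cast_ne_zero.mpr m.factorial_ne_zero
  have key1 : ((n + 1) * catalan n * (n.factorial * n.factorial) : ℕ) = (2 * n).factorial := by
    rw [hc1]; exact hb1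
  have key2 : ((n + 2) * catalan (n+1) * ((n+1).factorial * (n+1).factorial) : ℕ)
      = (2 * (n+1)).factorial := by
    rw [hc2]; exact hb2
  have q1 : (catalan n : ℚ) = ((2*n).factorial : ℚ) / (((n:ℚ)+1) * n.factorial * n.factorial) := by
    have := congrArg (Nat.cast : ℕ → ℚ) key1
    push_cast at this
    field_simp
    linarith [this]
  have q2 : (catalan (n+1) : ℚ)
      = ((2*(n+1)).factorial : ℚ) / (((n:ℚ)+2) * (n+1).factorial * (n+1).factorial) := by
    have := congrArg (Nat.cast : ℕ → ℚ) key2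
    push_cast at this
    field_simp
    linarith [this]
  have f1 : (n+1+n).factorial = (2*n+1) * (2*n).factorial := by
    have h : n+1+n = 2*n+1 := by omega
    rw [h, Nat.factorial_succ]
  have f2 : (n+2+n).factorial = (2*(n+1)).factorial := by congr 1; omega
  have f3 : (1+n).factorial = (n+1) * n.factorial := by
    have h : 1+n = n+1 := by omega
    rw [h, Nat.factorial_succ]
  have f4 : (n+2).factorial = (n+2) * ((n+1) * n.factorial) := by
    rw [Nat.factorial_succ, Nat.factorial_succ]
  have f5 : (n+1).factorial = (n+1) * n.factorial := Nat.factorial_succ n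
  have f6 : (0+n).factorial = n.factorial := by congr 1; omega
  rw [f1, f2, f3, f4, f6]
  push_cast [q1, q2, f5]
  have hn1 : ((n:ℚ)+1) ≠ 0 := by positivity
  have hn2 : ((n:ℚ)+2) ≠ 0 := by positivity
  field_simp
  ring
end

section
/- Let Q be a finite graded poset with rank levels Q₁,…,Q_d, and suppose Q is rank unimodal. For a positive integer k, the product poset [k] × Q has a unique rank level of largest size if and only if k ≤ d and there is a unique index i₀ ∈ [k, d] at which the quantity |Q_i| + |Q_{i−1}| + ⋯ + |Q_{i+1−k}| attains its maximum over i ∈ [1, d+k−1] (with Q_j interpreted as empty for j outside [1,d]). -/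
open Finset

/-- Lemma 2.2: let `Q` be a connected finite graded poset with rank function `r`
taking values in `[1,d]`, rank levels of sizes `N i`, and suppose `Q` is rank
unimodal.  Then `[k] × Q` has a unique rank level of largest size (the rank
levels of `[k] × Q` being the sets `L i = {(j,q) : (j+1) + r q = i + 1}`,
`i ∈ [1, d+k-1]`) if and only if `k ≤ d` and there is a unique `i₀ ∈ [k, d]`
at which `S i = |Q_i| + |Q_{i-1}| + ⋯ + |Q_{i+1-k}|` attains its maximum. -/
theorem stmt_16 {Q : Type*} [Fintype Q] [PartialOrder Q] (d k : ℕ) (hk : 0 < k) (hd : 0 < d)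
    (r : Q → ℕ)
    (hmin : ∀ x : Q, (∀ y : Q, ¬y < x) → r x = 1)
    (hcov : ∀ x y : Q, x ⋖ y → r y = r x + 1)
    (hrange : ∀ x : Q, r x ∈ Finset.Icc 1 d)
    (hsurj : ∀ i ∈ Finset.Icc 1 d, ∃ x : Q, r x = i)
    (N : ℕ → ℕ)
    (hN : ∀ i, N i = (Finset.univ.filter (fun x : Q => r x = i)).card)
    (hunimodal : ∃ m ∈ Finset.Icc 1 d,
      (∀ i j, i ≤ j → j ≤ m → N i ≤ N j) ∧ (∀ i j, m ≤ i → i ≤ j → N j ≤ N i))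
    (S : ℕ → ℕ) (hS : ∀ i, S i = ∑ s ∈ Finset.Ioc (i - k) i, N s)
    (L : ℕ → Finset (Fin k × Q))
    (hL : ∀ i, L i = Finset.univ.filter (fun p : Fin k × Q => (p.1 : ℕ) + 1 + r p.2 = i + 1)) :
    (∃! i, i ∈ Finset.Icc 1 (d + k - 1) ∧
        ∀ j ∈ Finset.Icc 1 (d + k - 1), (L j).card ≤ (L i).card)
    ↔ (k ≤ d ∧ ∃! i₀, i₀ ∈ Finset.Icc k d ∧
        ∀ i ∈ Finset.Icc 1 (d + k - 1), S i ≤ S i₀) := by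
  classical
  have hr1 : ∀ x : Q, 1 ≤ r x := fun x => (Finset.mem_Icc.1 (hrange x)).1
  have hrd : ∀ x : Q, r x ≤ d := fun x => (Finset.mem_Icc.1 (hrange x)).2
  -- N vanishes outside [1,d]
  have hN0 : ∀ s, s ∉ Finset.Icc 1 d → N s = 0 := by
    intro s hs
    rw [hN, Finset.card_eq_zero, Finset.filter_eq_empty_iff]
    intro x _ h
    exact hs (h ▸ hrange x)
  have hNpos : ∀ s, 1 ≤ s → s ≤ d → 0 < N s := by
    intro s h1 h2
    obtain ⟨x, hx⟩ := hsurj s (Finset.mem_Icc.2 ⟨h1, h2⟩)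
    rw [hN, Finset.card_pos]
    exact ⟨x, by simp [hx]⟩
  -- (L i).card = S i
  have hLS : ∀ i, (L i).card = S i := by
    intro i
    have h1 : (L i).card
        = (Finset.univ.filter fun q : Q => r q ∈ Finset.Ioc (i - k) i).card := by
      rw [hL]
      apply Finset.card_bij (fun p _ => p.2)
      · intro p hp
        simp only [Finset.mem_filter, Finset.mem_univ, true_and] at hp ⊢
        have := p.1.isLt
        have := hr1 p.2
        rw [Finset.mem_Ioc]
        omega
      · intro a ha b hb hab
        simp only [Finset.mem_filter, Finset.mem_univ, true_and] at ha hb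
        have h1 : (a.1 : ℕ) = (b.1 : ℕ) := by rw [hab] at ha; omega
        exact Prod.ext (Fin.ext h1) hab
      · intro q hq
        simp only [Finset.mem_filter, Finset.mem_univ, true_and, Finset.mem_Ioc] at hq
        refine ⟨(⟨i - r q, by omega⟩, q), ?_, rfl⟩
        simp only [Finset.mem_filter, Finset.mem_univ, true_and]
        omega
    rw [h1, hS,
      Finset.card_eq_sum_card_fiberwise (f := r) (t := Finset.Ioc (i - k) i)
        (s := Finset.univ.filter fun q : Q => r q ∈ Finset.Ioc (i - k) i)
        (fun x hx => (Finset.mem_filter.1 hx).2)]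
    refine Finset.sum_congr rfl fun s hs => ?_
    rw [hN]
    congr 1
    ext x
    simp only [Finset.mem_filter, Finset.mem_univ, true_and]
    exact ⟨fun h => h.2, fun h => ⟨h ▸ hs, h⟩⟩
  -- strict increase below k (when k ≤ d)
  have hSa : ∀ i, 1 ≤ i → i < k → k ≤ d → S i < S (i + 1) := by
    intro i h1 h2 h3
    have e : Finset.Ioc (i + 1 - k) (i + 1)
        = insert (i + 1) (Finset.Ioc (i - k) i) := by
      ext a
      simp only [Finset.mem_Ioc, Finset.mem_insert]
      omega
    rw [hS, hS, e, Finset.sum_insert (by simp only [Finset.mem_Ioc]; omega)]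
    have := hNpos (i + 1) (by omega) (by omega)
    omega
  -- strict decrease above d
  have hSb : ∀ i, d < i → i ≤ d + k - 1 → k ≤ d → S i < S (i - 1) := by
    intro i h1 h2 h3
    have e1 : Finset.Ioc (i - k) i = insert i (Finset.Ioc (i - k) (i - 1)) := by
      ext a
      simp only [Finset.mem_Ioc, Finset.mem_insert]
      omega
    have e2 : Finset.Ioc (i - 1 - k) (i - 1)
        = insert (i - k) (Finset.Ioc (i - k) (i - 1)) := by
      ext a
      simp only [Finset.mem_Ioc, Finset.mem_insert]
      omega
    rw [hS, hS, e1, e2, Finset.sum_insert (by simp only [Finset.mem_Ioc]; omega),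
      Finset.sum_insert (by simp only [Finset.mem_Ioc]; omega)]
    have h4 := hNpos (i - k) (by omega) (by omega)
    have h5 := hN0 i (by simp only [Finset.mem_Icc]; omega)
    omega
  -- bound by total
  have hT : ∀ j, S j ≤ ∑ s ∈ Finset.Icc 1 d, N s := by
    intro j
    rw [hS, ← Finset.sum_filter_of_ne
      (p := fun s => s ∈ Finset.Icc 1 d)
      (fun s _ hNs => by by_contra h; exact hNs (hN0 s h))]
    exact Finset.sum_le_sum_of_subset fun s hs => (Finset.mem_filter.1 hs).2
  have hTot : ∀ m, d ≤ m → m ≤ k → S m = ∑ s ∈ Finset.Icc 1 d, N s := by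
    intro m h1 h2
    rw [hS, ← Finset.sum_filter_of_ne
      (p := fun s => s ∈ Finset.Icc 1 d)
      (fun s _ hNs => by by_contra h; exact hNs (hN0 s h))]
    refine Finset.sum_congr ?_ fun _ _ => rfl
    ext a
    simp only [Finset.mem_filter, Finset.mem_Ioc, Finset.mem_Icc]
    omega
  -- the key equivalence of maximizer sets when k ≤ d
  have hiff : ∀ i, k ≤ d →
      ((i ∈ Finset.Icc 1 (d + k - 1) ∧
          ∀ j ∈ Finset.Icc 1 (d + k - 1), S j ≤ S i) ↔
        (i ∈ Finset.Icc k d ∧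
          ∀ j ∈ Finset.Icc 1 (d + k - 1), S j ≤ S i)) := by
    intro i hkd
    simp only [Finset.mem_Icc]
    constructor
    · rintro ⟨⟨hi1, hi2⟩, hmax⟩
      refine ⟨⟨?_, ?_⟩, hmax⟩
      · by_contra h
        push_neg at h
        have h1 := hSa i hi1 h hkd
        have h2 := hmax (i + 1) ⟨by omega, by omega⟩
        omega
      · by_contra h
        push_neg at h
        have h1 := hSb i h hi2 hkd
        have h2 := hmax (i - 1) ⟨by omega, by omega⟩
        omega
    · rintro ⟨⟨hi1, hi2⟩, hmax⟩
      exact ⟨⟨by omega, by omega⟩, hmax⟩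
  simp only [hLS]
  constructor
  · rintro ⟨i, hi, huniq⟩
    have hkd : k ≤ d := by
      by_contra hkd
      push_neg at hkd
      have h1 : d = i := huniq d ⟨Finset.mem_Icc.2 ⟨hd, by omega⟩,
        fun j _ => by rw [hTot d le_rfl (by omega)]; exact hT j⟩
      have h2 : k = i := huniq k ⟨Finset.mem_Icc.2 ⟨hk, by omega⟩,
        fun j _ => by rw [hTot k (by omega) le_rfl]; exact hT j⟩
      omega
    exact ⟨hkd, i, (hiff i hkd).1 hi, fun j hj => huniq j ((hiff j hkd).2 hj)⟩
  · rintro ⟨hkd, i, hi, huniq⟩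
    exact ⟨i, (hiff i hkd).2 hi, fun j hj => huniq j ((hiff j hkd).1 hj)⟩
end

section
/- If k ≥ d + 1, then the product poset [k] × Q, where Q is a finite graded poset whose longest chains have d elements, has exactly k − d + 1 rank levels of size |Q|, and these are its largest rank levels. -/
/-!
The projection `(j, q) ↦ q` maps the rank level `L i` of `[k] × Q` bijectively onto the
elements `q` with `r q ≤ i < r q + k`, since `j = i - r q` is forced. Hence `|L i| ≤ |Q|`, with
equality iff every rank `1, …, d` lies in `(i - k, i]`, i.e. iff `d ≤ i ≤ k`; for `k ≥ d` these
are `k - d + 1` levels.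
-/

open Finset

namespace ProdRankLevel

theorem forall_rank_window_iff {Q : Type*} {d k i : ℕ} {r : Q → ℕ} (hd : 0 < d)
    (hrange : ∀ q, r q ∈ Icc 1 d) (hsurj : ∀ s ∈ Icc 1 d, ∃ q, r q = s) :
    (∀ q, r q ≤ i ∧ i < r q + k) ↔ d ≤ i ∧ i ≤ k := by
  obtain ⟨q₁, hq₁⟩ := hsurj 1 (mem_Icc.mpr ⟨le_rfl, hd⟩)
  obtain ⟨q_d, hq_d⟩ := hsurj d (mem_Icc.mpr ⟨hd, le_rfl⟩)
  constructor
  · intro h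
    have h₁ := h q₁
    have h_d := h q_d
    omega
  · intro h q
    have := mem_Icc.mp (hrange q)
    omega

variable {Q : Type*} [Fintype Q]

/-- The element `j : Fin k` stands for `j + 1 ∈ [k]`. -/
def rankLevel (k : ℕ) (r : Q → ℕ) (i : ℕ) : Finset (Fin k × Q) :=
  univ.filter fun p => (p.1 : ℕ) + 1 + r p.2 = i + 1

theorem card_rankLevel (k : ℕ) (r : Q → ℕ) (i : ℕ) :
    #(rankLevel k r i) = #(univ.filter fun q => r q ≤ i ∧ i < r q + k) := by
  refine card_bij (fun p _ => p.2) ?_ ?_ ?_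
  · intro p hp
    simp only [rankLevel, mem_filter, mem_univ, true_and] at hp ⊢
    omega
  · intro p hp p' hp' h
    simp only [rankLevel, mem_filter, mem_univ, true_and] at hp hp'
    exact Prod.ext (Fin.ext (by rw [h] at hp; omega)) h
  · intro q hq
    simp only [mem_filter, mem_univ, true_and] at hq
    exact ⟨(⟨i - r q, by omega⟩, q), by simp only [rankLevel, mem_filter, mem_univ, true_and]; omega,
      rfl⟩

theorem card_rankLevel_le (k : ℕ) (r : Q → ℕ) (i : ℕ) :
    #(rankLevel k r i) ≤ Fintype.card Q :=
  card_rankLevel k r i ▸ card_filter_le _ _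

theorem card_rankLevel_eq_card_iff (k : ℕ) (r : Q → ℕ) (i : ℕ) :
    #(rankLevel k r i) = Fintype.card Q ↔ ∀ q, r q ≤ i ∧ i < r q + k := by
  rw [card_rankLevel, ← card_univ, card_filter_eq_iff]
  simp only [mem_univ, true_imp_iff]

end ProdRankLevel

open ProdRankLevel in
theorem stmt_17_general {Q : Type*} [Fintype Q] (d k : ℕ) (hd : 0 < d)
    (hk : d + 1 ≤ k)
    (r : Q → ℕ)
    (hrange : ∀ x : Q, r x ∈ Finset.Icc 1 d)
    (hsurj : ∀ i ∈ Finset.Icc 1 d, ∃ x : Q, r x = i)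
    (L : ℕ → Finset (Fin k × Q))
    (hL : ∀ i, L i = Finset.univ.filter (fun p : Fin k × Q => (p.1 : ℕ) + 1 + r p.2 = i + 1)) :
    ((Finset.Icc 1 (d + k - 1)).filter (fun i => (L i).card = Fintype.card Q)).card
        = k - d + 1 ∧
    ∀ i ∈ Finset.Icc 1 (d + k - 1), (L i).card ≤ Fintype.card Q := by
  obtain rfl : L = rankLevel k r := funext hL
  refine ⟨?_, fun i _ => card_rankLevel_le k r i⟩
  have hmax : (Icc 1 (d + k - 1)).filter (fun i => #(rankLevel k r i) = Fintype.card Q)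
      = Icc d k := by
    ext i
    simp only [mem_filter, mem_Icc, card_rankLevel_eq_card_iff,
      forall_rank_window_iff hd hrange hsurj]
    omega
  rw [hmax, Nat.card_Icc]
  omega

/-- If `k ≥ d + 1` and `Q` is a finite graded poset whose longest chains have `d`
elements, then `[k] × Q` has exactly `k - d + 1` rank levels of size `|Q|`,
and all its rank levels have size at most `|Q|`. -/
theorem stmt_17 {Q : Type*} [Fintype Q] [PartialOrder Q] (d k : ℕ) (hd : 0 < d)
    (hk : d + 1 ≤ k)
    (r : Q → ℕ)
    (hmin : ∀ x : Q, (∀ y : Q, ¬y < x) → r x = 1)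
    (hcov : ∀ x y : Q, x ⋖ y → r y = r x + 1)
    (hrange : ∀ x : Q, r x ∈ Finset.Icc 1 d)
    (hsurj : ∀ i ∈ Finset.Icc 1 d, ∃ x : Q, r x = i)
    (L : ℕ → Finset (Fin k × Q))
    (hL : ∀ i, L i = Finset.univ.filter (fun p : Fin k × Q => (p.1 : ℕ) + 1 + r p.2 = i + 1)) :
    ((Finset.Icc 1 (d + k - 1)).filter (fun i => (L i).card = Fintype.card Q)).card
        = k - d + 1 ∧
    ∀ i ∈ Finset.Icc 1 (d + k - 1), (L i).card ≤ Fintype.card Q :=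
  stmt_17_general d k hd hk r hrange hsurj L hL
end
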